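/- arXiv:1809.03289 — 5 statements merged into one kernel-verified Lean document; each statement's English description precedes it below -/
import Mathlib

section
/- If f is five times continuously differentiable on a neighborhood of x, then the Jiang–Shu smoothness indicator β₀³ = (13/12)(f(x-h) - 2f(x) + f(x+h))² + (1/4)(f(x-h) - f(x+h))² satisfies β₀³ = (f'(x))² h² + ((13/12)(f''(x))² + (1/3) f'(x) f'''(x)) h⁴ + O(h⁵) as h → 0. -/
/-!
Taylor's formula with an `O(h⁵)` remainder gives, by symmetry in `h`,
`f(x-h) - 2f(x) + f(x+h) = f''(x) h² + f⁗(x) h⁴/12 + O(h⁵)` and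
`f(x-h) - f(x+h) = -2f'(x) h - f'''(x) h³/3 + O(h⁵)`.
Since these polynomials are bounded near `0`, squaring keeps the error `O(h⁵)`, and the
squared polynomials contribute exactly the claimed `h²` and `h⁴` terms plus terms in `h⁶` and `h⁸`.
-/

open Asymptotics Filter Topology Nat

section Taylor

variable {E : Type*} [NormedAddCommGroup E] [NormedSpace ℝ E] {f : ℝ → E} {x : ℝ} {n : ℕ}

theorem ContDiffAt.isLittleO_taylor (hf : ContDiffAt ℝ n f x) :
    (fun h : ℝ => f (x + h) - ∑ k ∈ Finset.range (n + 1), ((k ! : ℝ)⁻¹ * h ^ k) • iteratedDeriv k f x)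
      =o[𝓝 0] fun h => h ^ n := by
  obtain ⟨u, hu, hfu⟩ := hf.contDiffOn le_rfl (by simp)
  obtain ⟨ε, hε, hball⟩ := Metric.mem_nhds_iff.1 hu
  have hx : x ∈ Metric.ball x ε := Metric.mem_ball_self hε
  have htaylor := taylor_isLittleO (convex_ball x ε) hx (hfu.mono hball)
  rw [nhdsWithin_eq_nhds.2 (Metric.ball_mem_nhds x hε)] at htaylor
  have hshift : Tendsto (x + ·) (𝓝 0) (𝓝 x) := by
    simpa using (continuous_const_add x).tendsto 0
  convert htaylor.comp_tendsto hshift using 1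
  · ext h
    simp [taylor_within_apply, iteratedDerivWithin_of_isOpen Metric.isOpen_ball hx]
  · simp [Function.comp_def]

theorem ContDiffAt.isBigO_taylor (hf : ContDiffAt ℝ (n + 1) f x) :
    (fun h : ℝ => f (x + h) - ∑ k ∈ Finset.range (n + 1), ((k ! : ℝ)⁻¹ * h ^ k) • iteratedDeriv k f x)
      =O[𝓝 0] fun h => h ^ (n + 1) := by
  have hnext := (ContDiffAt.isLittleO_taylor (n := n + 1) (by exact_mod_cast hf)).isBigO
  have hterm : (fun h : ℝ => (((n + 1) ! : ℝ)⁻¹ * h ^ (n + 1)) • iteratedDeriv (n + 1) f x)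
      =O[𝓝 0] fun h => h ^ (n + 1) := by
    simpa using (isBigO_const_mul_self ((n + 1) ! : ℝ)⁻¹ (fun h : ℝ => h ^ (n + 1)) (𝓝 0)).smul
      (isBigO_const_one ℝ (iteratedDeriv (n + 1) f x) (𝓝 (0 : ℝ)))
  refine (hnext.add hterm).congr_left fun h => ?_
  rw [Finset.sum_range_succ]
  abel

end Taylor

theorem Asymptotics.IsBigO.comp_neg_pow {E : Type*} [Norm E] {r : ℝ → E} {n : ℕ}
    (h : r =O[𝓝 0] fun t => t ^ n) : (fun t => r (-t)) =O[𝓝 0] fun t => t ^ n := by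
  have hneg : Tendsto (fun t : ℝ => -t) (𝓝 0) (𝓝 0) := by simpa using tendsto_neg (0 : ℝ)
  exact (h.comp_tendsto hneg).trans (isBigO_of_le _ fun t => by simp [norm_pow])

theorem Asymptotics.IsBigO.sq_sub_sq {α R : Type*} [NormedCommRing R] {l : Filter α}
    {u U : α → R} {g : α → ℝ} (h : (fun t => u t - U t) =O[l] g)
    (hU : U =O[l] fun _ => (1 : ℝ)) (hg : g =O[l] fun _ => (1 : ℝ)) :
    (fun t => u t ^ 2 - U t ^ 2) =O[l] g := by
  have hsum : (fun t => u t + U t) =O[l] fun _ => (1 : ℝ) :=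
    ((h.trans hg).add (hU.const_mul_left 2)).congr_left fun t => by ring
  exact (h.mul hsum).congr (fun t => by ring) fun t => mul_one _

section Differences

variable {f : ℝ → ℝ} {x : ℝ}

theorem ContDiffAt.isBigO_second_difference (hf : ContDiffAt ℝ 5 f x) :
    (fun h => f (x - h) - 2 * f x + f (x + h)
        - (iteratedDeriv 2 f x * h ^ 2 + iteratedDeriv 4 f x / 12 * h ^ 4))
      =O[𝓝 0] fun h : ℝ => h ^ 5 := by
  have hplus := ContDiffAt.isBigO_taylor (n := 4) (by exact_mod_cast hf)
  refine (hplus.comp_neg_pow.add hplus).congr_left fun h => ?_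
  simp [Finset.sum_range_succ, Nat.factorial, sub_eq_add_neg]
  ring

theorem ContDiffAt.isBigO_central_difference (hf : ContDiffAt ℝ 5 f x) :
    (fun h => f (x - h) - f (x + h) - (-2 * deriv f x * h - iteratedDeriv 3 f x / 3 * h ^ 3))
      =O[𝓝 0] fun h : ℝ => h ^ 5 := by
  have hplus := ContDiffAt.isBigO_taylor (n := 4) (by exact_mod_cast hf)
  refine (hplus.comp_neg_pow.sub hplus).congr_left fun h => ?_
  simp [Finset.sum_range_succ, Nat.factorial, sub_eq_add_neg]
  ring

end Differences

/-- Taylor expansion of the Jiang–Shu smoothness indicator `β₀³` about the cell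
center `x`, for an `f` that is `C⁵` on a neighborhood of `x`. -/
theorem stmt_3 (f : ℝ → ℝ) (x : ℝ) (hf : ContDiffAt ℝ 5 f x) :
    (fun h : ℝ =>
        (13/12) * (f (x - h) - 2 * f x + f (x + h))^2
          + (1/4) * (f (x - h) - f (x + h))^2
        - ((deriv f x)^2 * h^2
            + ((13/12) * (iteratedDeriv 2 f x)^2
                + (1/3) * deriv f x * iteratedDeriv 3 f x) * h^4))
      =O[𝓝 0] fun h : ℝ => h^5 := by
  have hbounded {p : ℝ → ℝ} (hp : Continuous p) (hp0 : p 0 = 0) : p =O[𝓝 0] fun _ => (1 : ℝ) :=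
    (hp0 ▸ hp.tendsto 0).isBigO_one ℝ
  have hpow := hbounded (p := fun h => h ^ 5) (by fun_prop) (by simp)
  have hsecond := hf.isBigO_second_difference.sq_sub_sq (hbounded (by fun_prop) (by simp)) hpow
  have hcentral := hf.isBigO_central_difference.sq_sub_sq (hbounded (by fun_prop) (by simp)) hpow
  have htail : (fun h : ℝ =>
      (13 / 72 * iteratedDeriv 2 f x * iteratedDeriv 4 f x + iteratedDeriv 3 f x ^ 2 / 36) * h ^ 6
        + 13 / 1728 * iteratedDeriv 4 f x ^ 2 * h ^ 8) =O[𝓝 0] fun h : ℝ => h ^ 5 :=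
    ((isLittleO_pow_pow (by norm_num)).isBigO.const_mul_left _).add
      ((isLittleO_pow_pow (by norm_num)).isBigO.const_mul_left _)
  exact (((hsecond.const_mul_left (13 / 12)).add (hcentral.const_mul_left (1 / 4))).add
    htail).congr_left fun h => by ring
end

section
/- Let γₖ > 0 for k = 1,…,m with Σγₖ = 1, and suppose ηₖ(h) ≥ 0 satisfy ηₖ(h) = O(h⁴) as h → 0. Then the normalized nonlinear weights ωₖ(h) := γₖ(1 + ηₖ(h)) / Σⱼ γⱼ(1 + ηⱼ(h)) satisfy ωₖ(h) = γₖ + O(h⁴) as h → 0. -/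
open Asymptotics Filter Topology

/-!
Since `∑ γⱼ = 1`, the denominator is `1 + T` with `T = ∑ γⱼ ηⱼ`, so
`ωₖ - γₖ = γₖ (ηₖ - T) / (1 + T)`. The numerator is `O(h⁴)`, and `T → 0` makes
`(1 + T)⁻¹` bounded.
-/

section NormalizedWeight

variable {ι α 𝕜 : Type*} [Fintype ι] [NormedField 𝕜]

def normalizedWeight (γ : ι → 𝕜) (η : ι → α → 𝕜) (k : ι) (x : α) : 𝕜 :=
  γ k * (1 + η k x) / ∑ j, γ j * (1 + η j x)

theorem sum_mul_one_add_of_sum_eq_one {γ η : ι → 𝕜} (hsum : ∑ j, γ j = 1) :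
    ∑ j, γ j * (1 + η j) = 1 + ∑ j, γ j * η j := by
  simp only [mul_add, mul_one, Finset.sum_add_distrib, hsum]

theorem normalizedWeight_sub_eq {γ : ι → 𝕜} {η : ι → α → 𝕜} (hsum : ∑ j, γ j = 1) (k : ι)
    {x : α} (hx : 1 + ∑ j, γ j * η j x ≠ 0) :
    normalizedWeight γ η k x - γ k
      = γ k * (η k x - ∑ j, γ j * η j x) * (1 + ∑ j, γ j * η j x)⁻¹ := by
  rw [normalizedWeight, sum_mul_one_add_of_sum_eq_one hsum]
  field_simp
  ring

theorem isBigO_normalizedWeight_sub {l : Filter α} {g : α → 𝕜} {γ : ι → 𝕜}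
    {η : ι → α → 𝕜} (hsum : ∑ j, γ j = 1) (hη : ∀ j, η j =O[l] g)
    (hg : Tendsto g l (𝓝 0)) (k : ι) :
    (fun x => normalizedWeight γ η k x - γ k) =O[l] g := by
  set T : α → 𝕜 := fun x => ∑ j, γ j * η j x
  have hT : T =O[l] g := by
    simpa only [T, ← Finset.sum_fn] using IsBigO.sum fun j _ => (hη j).const_mul_left (γ j)
  have hden : Tendsto (fun x => 1 + T x) l (𝓝 1) := by
    simpa using tendsto_const_nhds.add (hT.trans_tendsto hg)
  have hinv : (fun x => (1 + T x)⁻¹) =O[l] fun _ => (1 : 𝕜) :=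
    (hden.inv₀ one_ne_zero).isBigO_one 𝕜
  have hnum : (fun x => γ k * (η k x - T x)) =O[l] g := ((hη k).sub hT).const_mul_left (γ k)
  refine (hnum.mul hinv).congr' ?_ (by simp)
  filter_upwards [hden.eventually_ne one_ne_zero] with x hx
  exact (normalizedWeight_sub_eq hsum k hx).symm

end NormalizedWeight

theorem stmt_7_general (m : ℕ) (γ : Fin m → ℝ)
    (hsum : ∑ k, γ k = 1) (η : Fin m → ℝ → ℝ)
    (hη : ∀ k, (fun h => η k h) =O[𝓝[>] (0:ℝ)] fun h => h^4) (k : Fin m) :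
    (fun h => γ k * (1 + η k h) / ∑ j, γ j * (1 + η j h) - γ k)
      =O[𝓝[>] (0:ℝ)] fun h => h^4 :=
  isBigO_normalizedWeight_sub hsum hη
    (((continuous_pow 4).tendsto' 0 0 (by norm_num)).mono_left nhdsWithin_le_nhds) k

/-- The normalized nonlinear weights converge to the linear weights at fourth
order. -/
theorem stmt_7 (m : ℕ) (γ : Fin m → ℝ) (hγ : ∀ k, 0 < γ k)
    (hsum : ∑ k, γ k = 1) (η : Fin m → ℝ → ℝ) (hη0 : ∀ k h, 0 ≤ η k h)
    (hη : ∀ k, (fun h => η k h) =O[𝓝[>] (0:ℝ)] fun h => h^4) (k : Fin m) :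
    (fun h => γ k * (1 + η k h) / ∑ j, γ j * (1 + η j h) - γ k)
      =O[𝓝[>] (0:ℝ)] fun h => h^4 :=
  stmt_7_general m γ hsum η hη k
end

section
/- Let γₖ > 0 with Σ_{k=1}^m γₖ = 1, let ωₖ ≥ 0 with Σωₖ = 1, and let H ∈ ℝ. Suppose each candidate reconstruction satisfies |Pₖ - H| ≤ C h^{rₖ}. Then the convex combination satisfies |Σₖ ωₖ Pₖ - H| ≤ C Σₖ ωₖ h^{rₖ}; in particular if ωₖ = γₖ + O(h^s) and |Pₖ - H| = O(h³) for all k while the high-order candidate satisfies |P_big - H| = O(h⁵), and s ≥ 2, then the WENO-AO reconstruction F := (ω_big/γ_big)(P_big - Σₖ γₖ Pₖ) + Σₖ ωₖ Pₖ satisfies F - H = O(h⁵). -/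
open Asymptotics Filter Topology

/-!
A convex combination of candidates inherits the weighted average of their errors. For the
WENO-AO reconstruction `F`, the normalisations of both weight families let one rewrite
`F - H = (ωbig/γbig) (Pbig - H) + ∑ₖ (ωₖ - (ωbig/γbig) γₖ) (Pₖ - H)`.
The first term is `O(1) · O(h⁵)`; in the second, each effective weight
`ωₖ - (ωbig/γbig) γₖ = (ωₖ - γₖ) - (γₖ/γbig) (ωbig - γbig)` is `O(h^s) ⊆ O(h²)`,
which multiplies the `O(h³)` error of the low-order candidate up to `O(h⁵)`.
-/

theorem abs_sum_mul_sub_le {ι : Type*} (s : Finset ι) {ω P e : ι → ℝ} {H : ℝ}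
    (hω : ∀ k ∈ s, 0 ≤ ω k) (hsum : ∑ k ∈ s, ω k = 1) (hP : ∀ k ∈ s, |P k - H| ≤ e k) :
    |∑ k ∈ s, ω k * P k - H| ≤ ∑ k ∈ s, ω k * e k := by
  have hsplit : ∑ k ∈ s, ω k * P k - H = ∑ k ∈ s, ω k * (P k - H) := by
    simp only [mul_sub, Finset.sum_sub_distrib, ← Finset.sum_mul, hsum, one_mul]
  calc |∑ k ∈ s, ω k * P k - H|
      = |∑ k ∈ s, ω k * (P k - H)| := by rw [hsplit]
    _ ≤ ∑ k ∈ s, |ω k * (P k - H)| := Finset.abs_sum_le_sum_abs _ _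
    _ ≤ ∑ k ∈ s, ω k * e k := Finset.sum_le_sum fun k hk => by
        rw [abs_mul, abs_of_nonneg (hω k hk)]
        exact mul_le_mul_of_nonneg_left (hP k hk) (hω k hk)

theorem wenoAO_sub_eq {ι : Type*} (s : Finset ι) {γ ω P : ι → ℝ} {γbig ωbig Pbig H : ℝ}
    (hγbig : γbig ≠ 0) (hγsum : γbig + ∑ k ∈ s, γ k = 1) (hωsum : ωbig + ∑ k ∈ s, ω k = 1) :
    ωbig / γbig * (Pbig - ∑ k ∈ s, γ k * P k) + ∑ k ∈ s, ω k * P k - H =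
      ωbig / γbig * (Pbig - H) + ∑ k ∈ s, (ω k - ωbig / γbig * γ k) * (P k - H) := by
  have hexpand : ∑ k ∈ s, (ω k - ωbig / γbig * γ k) * (P k - H) =
      ∑ k ∈ s, ω k * P k - (∑ k ∈ s, ω k) * H
        - ωbig / γbig * ∑ k ∈ s, γ k * P k + ωbig / γbig * (∑ k ∈ s, γ k) * H := by
    simp only [sub_mul, mul_sub, Finset.sum_sub_distrib, Finset.sum_mul, Finset.mul_sum,
      mul_assoc]
    ring
  rw [hexpand, show ∑ k ∈ s, ω k = 1 - ωbig by linarith,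
    show ∑ k ∈ s, γ k = 1 - γbig by linarith]
  field_simp
  ring

theorem isBigO_pow_pow_of_le {𝕜 : Type*} [NormedField 𝕜] {a b : ℕ} (hab : a ≤ b) :
    (fun x : 𝕜 => x ^ b) =O[𝓝 0] fun x => x ^ a := by
  rcases hab.eq_or_lt with rfl | hlt
  exacts [isBigO_refl _ _, (isLittleO_pow_pow hlt).isBigO]

theorem isBigO_sub_div_mul_of_isBigO_sub {α : Type*} {l : Filter α} {g ω ωbig : α → ℝ}
    {γ γbig : ℝ} (hγbig : γbig ≠ 0) (hω : (fun x => ω x - γ) =O[l] g)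
    (hωbig : (fun x => ωbig x - γbig) =O[l] g) :
    (fun x => ω x - ωbig x / γbig * γ) =O[l] g := by
  have hrewrite : (fun x => ω x - ωbig x / γbig * γ) =
      fun x => (ω x - γ) - γ / γbig * (ωbig x - γbig) := by
    funext x
    field_simp
    ring
  rw [hrewrite]
  exact hω.sub (hωbig.const_mul_left _)

/-- Convex-combination error bound and fifth-order accuracy of the WENO-AO
reconstruction. -/
theorem stmt_8 :
    (∀ (m : ℕ) (ω P : Fin m → ℝ) (H C h : ℝ) (r : Fin m → ℕ),
        (∀ k, 0 ≤ ω k) → (∑ k, ω k = 1) →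
        (∀ k, |P k - H| ≤ C * h ^ r k) →
        |(∑ k, ω k * P k) - H| ≤ C * ∑ k, ω k * h ^ r k) ∧
    (∀ (m : ℕ) (γ : Fin m → ℝ) (γbig : ℝ) (s : ℕ),
        (∀ k, 0 < γ k) → 0 < γbig → γbig + ∑ k, γ k = 1 → 2 ≤ s →
        ∀ (ω : Fin m → ℝ → ℝ) (ωbig : ℝ → ℝ) (P : Fin m → ℝ → ℝ)
          (Pbig H : ℝ → ℝ),
        (∀ h, ωbig h + ∑ k, ω k h = 1) →
        (∀ k, (fun h => ω k h - γ k) =O[𝓝[>] (0:ℝ)] fun h => h ^ s) →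
        ((fun h => ωbig h - γbig) =O[𝓝[>] (0:ℝ)] fun h => h ^ s) →
        (∀ k, (fun h => P k h - H h) =O[𝓝[>] (0:ℝ)] fun h => h ^ 3) →
        ((fun h => Pbig h - H h) =O[𝓝[>] (0:ℝ)] fun h => h ^ 5) →
        (fun h => (ωbig h / γbig) * (Pbig h - ∑ k, γ k * P k h)
            + (∑ k, ω k h * P k h) - H h) =O[𝓝[>] (0:ℝ)] fun h => h ^ 5) := by
  refine ⟨fun m ω P H C h r hω hsum hP => ?_,
    fun m γ γbig s _ hγbig hγsum hs ω ωbig P Pbig H hωsum hωO hωbigO hPO hPbigO => ?_⟩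
  · rw [Finset.mul_sum]
    refine (abs_sum_mul_sub_le _ (fun k _ => hω k) hsum fun k _ => hP k).trans_eq ?_
    simp only [mul_left_comm]
  · have hpow (a : ℕ) (ha : a ≤ s) : (fun h : ℝ => h ^ s) =O[𝓝[>] 0] fun h => h ^ a :=
      (isBigO_pow_pow_of_le ha).mono nhdsWithin_le_nhds
    have hone : (fun h : ℝ => h ^ s) =O[𝓝[>] 0] fun _ => (1:ℝ) := by
      simpa only [pow_zero] using hpow 0 s.zero_le
    have hωbig : ωbig =O[𝓝[>] (0:ℝ)] fun _ => (1:ℝ) := by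
      simpa only [sub_add_cancel] using
        (hωbigO.trans hone).add (isBigO_const_const γbig one_ne_zero _)
    have hbig_bdd : (fun h => ωbig h / γbig) =O[𝓝[>] (0:ℝ)] fun _ => (1:ℝ) := by
      simpa only [div_eq_inv_mul] using hωbig.const_mul_left γbig⁻¹
    have hlow (k : Fin m) : (fun h => (ω k h - ωbig h / γbig * γ k) * (P k h - H h))
        =O[𝓝[>] (0:ℝ)] fun h => h ^ 5 := by
      have hweight := isBigO_sub_div_mul_of_isBigO_sub hγbig.ne' ((hωO k).trans (hpow 2 hs))
        (hωbigO.trans (hpow 2 hs))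
      simpa only [← pow_add] using hweight.mul (hPO k)
    simp only [wenoAO_sub_eq _ hγbig.ne' hγsum (hωsum _)]
    have hhigh : (fun h => ωbig h / γbig * (Pbig h - H h)) =O[𝓝[>] (0:ℝ)] fun h => h ^ 5 := by
      simpa only [one_mul] using hbig_bdd.mul hPbigO
    exact hhigh.add (IsBigO.fun_sum fun k _ => hlow k)
end

section
/- Suppose τ(h)²/(βₖ(h)+ε)² = τ(h)²/((f')⁴h⁴) + O(h⁻³) for k ∈ S (smooth stencils) and τ(h)²/(βₖ(h)+ε)² = τ(h)²·O(1) for k ∈ D (discontinuous stencils), with τ(h) bounded away from 0 and f' ≠ 0. Then for k ∈ D the normalized weights ωₖ = γₖ(1+τ²/(βₖ+ε)²)/Σⱼ γⱼ(1+τ²/(βⱼ+ε)²) satisfy ωₖ = O(h⁴), and for k ∈ S they satisfy ωₖ = γₖ/(Σ_{j∈S} γⱼ) + O(h) as h → 0. -/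
/-!
Multiply every unnormalized weight `γₖ (1 + qₖ)` by `f'⁴ h⁴ / τ²`, which leaves the normalized
weights unchanged. Since `τ` stays away from `0`, an error `O(h⁻³)` becomes `O(h)` and `O(τ²)`
becomes `O(h⁴)`: the rescaled smooth weights are `γₖ + O(h)`, the rescaled discontinuous ones are
`O(h⁴)`, and the rescaled denominator tends to `∑_{j ∈ S} γⱼ > 0`. Dividing by a quantity with a
nonzero limit preserves these error bounds.
-/

open Asymptotics Filter Topology

section Ratio

variable {α 𝕜 : Type*} [NormedField 𝕜] {l : Filter α} {x y ε : α → 𝕜} {c C : 𝕜}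

theorem Asymptotics.IsBigO.tendsto_of_sub (hy : (fun t => y t - C) =O[l] ε)
    (hε : Tendsto ε l (𝓝 0)) : Tendsto y l (𝓝 C) :=
  tendsto_sub_nhds_zero_iff.mp (hy.trans_tendsto hε)

theorem Asymptotics.IsBigO.div_of_tendsto (hx : x =O[l] ε) (hy : Tendsto y l (𝓝 C))
    (hC : C ≠ 0) : (fun t => x t / y t) =O[l] ε := by
  simpa only [div_eq_mul_inv, mul_one] using hx.mul ((hy.inv₀ hC).isBigO_one (F := 𝕜))

theorem Asymptotics.IsBigO.div_sub_div_of_sub (hx : (fun t => x t - c) =O[l] ε)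
    (hy : (fun t => y t - C) =O[l] ε) (hε : Tendsto ε l (𝓝 0)) (hC : C ≠ 0) :
    (fun t => x t / y t - c / C) =O[l] ε := by
  have hyC := hy.tendsto_of_sub hε
  refine ((hx.sub (hy.const_mul_left (c / C))).div_of_tendsto hyC hC).congr' ?_ .rfl
  filter_upwards [hyC.eventually_ne hC] with t ht
  field_simp
  ring

end Ratio

theorem Asymptotics.IsBigO.sum_sub_sum_of_disjoint_union {α ι 𝕜 : Type*} [NormedField 𝕜]
    [Fintype ι] [DecidableEq ι] {l : Filter α} {ε : α → 𝕜} {f : ι → α → 𝕜} {c : ι → 𝕜}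
    {S D : Finset ι} (hSD : Disjoint S D) (hcover : S ∪ D = Finset.univ)
    (hS : ∀ k ∈ S, (fun t => f k t - c k) =O[l] ε) (hD : ∀ k ∈ D, f k =O[l] ε) :
    (fun t => ∑ j, f j t - ∑ j ∈ S, c j) =O[l] ε := by
  have hsplit : ∀ t, ∑ j, f j t - ∑ j ∈ S, c j
      = ∑ j ∈ S, (f j t - c j) + ∑ j ∈ D, f j t := fun t => by
    rw [← hcover, Finset.sum_union hSD, Finset.sum_sub_distrib]
    ring
  simp only [hsplit]
  exact (IsBigO.fun_sum hS).add (IsBigO.fun_sum hD)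

theorem isBigO_pow_four_id_nhdsGT : (fun h : ℝ => h ^ 4) =O[𝓝[>] 0] fun h => h := by
  simpa using ((isLittleO_pow_pow (𝕜 := ℝ) (by norm_num : 1 < 4)).isBigO).mono
    nhdsWithin_le_nhds

theorem isBigO_one_sq_of_eventually_le {α : Type*} {l : Filter α} {τ : α → ℝ}
    (hτ : ∃ δ > 0, ∀ᶠ t in l, δ ≤ τ t) : (fun _ => (1 : ℝ)) =O[l] fun t => τ t ^ 2 := by
  obtain ⟨δ, hδ, hτ⟩ := hτ
  refine IsBigO.of_bound (δ ^ 2)⁻¹ ?_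
  filter_upwards [hτ] with t ht
  rw [norm_one, Real.norm_of_nonneg (sq_nonneg _), ← div_eq_inv_mul, one_le_div₀ (by positivity)]
  exact pow_le_pow_left₀ hδ.le ht 2

section WeightScale

noncomputable def weightScale (fp : ℝ) (τ : ℝ → ℝ) (h : ℝ) : ℝ := fp ^ 4 * h ^ 4 / τ h ^ 2

variable {l : Filter ℝ} {fp : ℝ} {τ q : ℝ → ℝ}

theorem sq_mul_weightScale_isBigO :
    (fun h => τ h ^ 2 * weightScale fp τ h) =O[l] fun h => h ^ 4 := by
  refine IsBigO.of_bound ‖fp ^ 4‖ (.of_forall fun h => ?_)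
  rcases eq_or_ne (τ h) 0 with hτ | hτ
  · simp [hτ, weightScale]
    positivity
  · rw [weightScale, mul_div_cancel₀ _ (pow_ne_zero 2 hτ), norm_mul]

theorem weightScale_isBigO (hτ : ∃ δ > 0, ∀ᶠ h in l, δ ≤ τ h) :
    weightScale fp τ =O[l] fun h => h ^ 4 := by
  simpa only [one_mul] using ((isBigO_one_sq_of_eventually_le hτ).mul
    (isBigO_refl (weightScale fp τ) l)).trans sq_mul_weightScale_isBigO

theorem inv_pow_three_mul_weightScale_isBigO (hτ : ∃ δ > 0, ∀ᶠ h in l, δ ≤ τ h) :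
    (fun h => (h ^ 3)⁻¹ * weightScale fp τ h) =O[l] fun h => h := by
  obtain ⟨δ, hδ, hτ⟩ := hτ
  refine IsBigO.of_bound (‖fp ^ 4‖ / δ ^ 2) ?_
  filter_upwards [hτ] with h ht
  have hscale : (h ^ 3)⁻¹ * weightScale fp τ h = fp ^ 4 * h / τ h ^ 2 := by
    rcases eq_or_ne h 0 with rfl | hh
    · simp [weightScale]
    · rw [weightScale]
      field_simp
  rw [hscale, norm_div, norm_mul, Real.norm_of_nonneg (sq_nonneg _), div_mul_eq_mul_div]
  gcongr

theorem eventually_weightScale_ne_zero (hfp : fp ≠ 0)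
    (hτ : ∃ δ > 0, ∀ᶠ h in 𝓝[>] (0 : ℝ), δ ≤ τ h) :
    ∀ᶠ h in 𝓝[>] (0 : ℝ), weightScale fp τ h ≠ 0 := by
  obtain ⟨δ, hδ, hτ⟩ := hτ
  filter_upwards [hτ, self_mem_nhdsWithin] with h ht (hh : 0 < h)
  have : τ h ≠ 0 := (hδ.trans_le ht).ne'
  unfold weightScale
  positivity

theorem one_add_mul_weightScale_sub_one_isBigO (hfp : fp ≠ 0)
    (hτ : ∃ δ > 0, ∀ᶠ h in 𝓝[>] (0 : ℝ), δ ≤ τ h)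
    (hq : (fun h => q h - τ h ^ 2 / (fp ^ 4 * h ^ 4)) =O[𝓝[>] (0 : ℝ)] fun h => (h ^ 3)⁻¹) :
    (fun h => (1 + q h) * weightScale fp τ h - 1) =O[𝓝[>] (0 : ℝ)] fun h => h := by
  refine ((weightScale_isBigO (fp := fp) hτ).trans isBigO_pow_four_id_nhdsGT |>.add
    ((hq.mul (isBigO_refl (weightScale fp τ) _)).trans
      (inv_pow_three_mul_weightScale_isBigO hτ))).congr' ?_ .rfl
  filter_upwards [eventually_weightScale_ne_zero hfp hτ] with h hB
  rw [← inv_div, ← weightScale]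
  field_simp
  ring

theorem one_add_mul_weightScale_isBigO (hτ : ∃ δ > 0, ∀ᶠ h in l, δ ≤ τ h)
    (hq : q =O[l] fun h => τ h ^ 2) :
    (fun h => (1 + q h) * weightScale fp τ h) =O[l] fun h => h ^ 4 :=
  (((isBigO_one_sq_of_eventually_le hτ).add hq).mul
    (isBigO_refl (weightScale fp τ) l)).trans sq_mul_weightScale_isBigO

end WeightScale

theorem stmt_10_general (m : ℕ) (γ : Fin m → ℝ) (hγ : ∀ k, 0 < γ k)
    (S D : Finset (Fin m)) (hSD : Disjoint S D)
    (hcover : S ∪ D = Finset.univ) (hSne : S.Nonempty)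
    (τ : ℝ → ℝ) (q : Fin m → ℝ → ℝ)
    (fp : ℝ) (hfp : fp ≠ 0)
    (hτ : ∃ δ > 0, ∀ᶠ h in 𝓝[>] (0:ℝ), δ ≤ τ h)
    (hqS : ∀ k ∈ S,
      (fun h => q k h - (τ h)^2 / (fp^4 * h^4)) =O[𝓝[>] (0:ℝ)] fun h => (h^3)⁻¹)
    (hqD : ∀ k ∈ D, (fun h => q k h) =O[𝓝[>] (0:ℝ)] fun h => (τ h)^2) :
    (∀ k ∈ D,
      (fun h => γ k * (1 + q k h) / ∑ j, γ j * (1 + q j h))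
        =O[𝓝[>] (0:ℝ)] fun h => h^4) ∧
    (∀ k ∈ S,
      (fun h => γ k * (1 + q k h) / (∑ j, γ j * (1 + q j h)) - γ k / ∑ j ∈ S, γ j)
        =O[𝓝[>] (0:ℝ)] fun h => h) := by
  set x : Fin m → ℝ → ℝ := fun j h => γ j * ((1 + q j h) * weightScale fp τ h)
  have hG : ∑ j ∈ S, γ j ≠ 0 := (Finset.sum_pos (fun j _ => hγ j) hSne).ne'
  have hweight : ∀ k, (fun h => γ k * (1 + q k h) / ∑ j, γ j * (1 + q j h))
      =ᶠ[𝓝[>] 0] fun h => x k h / ∑ j, x j h := fun k => by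
    filter_upwards [eventually_weightScale_ne_zero hfp hτ] with h hB
    simp only [x, ← mul_assoc, ← Finset.sum_mul, mul_div_mul_right _ _ hB]
  have hxS : ∀ k ∈ S, (fun h => x k h - γ k) =O[𝓝[>] 0] fun h => h := fun k hk => by
    simpa only [x, mul_sub, mul_one] using
      (one_add_mul_weightScale_sub_one_isBigO hfp hτ (hqS k hk)).const_mul_left (γ k)
  have hxD : ∀ k ∈ D, x k =O[𝓝[>] 0] fun h => h ^ 4 := fun k hk =>
    (one_add_mul_weightScale_isBigO hτ (hqD k hk)).const_mul_left (γ k)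
  have hsum : (fun h => ∑ j, x j h - ∑ j ∈ S, γ j) =O[𝓝[>] 0] fun h => h :=
    .sum_sub_sum_of_disjoint_union hSD hcover hxS
      fun k hk => (hxD k hk).trans isBigO_pow_four_id_nhdsGT
  have hid : Tendsto (fun h : ℝ => h) (𝓝[>] 0) (𝓝 0) := nhdsWithin_le_nhds
  refine ⟨fun k hk => ?_, fun k hk => ?_⟩
  · exact ((hxD k hk).div_of_tendsto (hsum.tendsto_of_sub hid) hG).congr' (hweight k).symm .rfl
  · exact ((hxS k hk).div_sub_div_of_sub hsum hid hG).congr'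
      ((hweight k).symm.sub .rfl) .rfl

/-- Behaviour of the normalized nonlinear weights when a discontinuity lies in
some stencils (`D`) while the others (`S`) remain smooth: weights of
discontinuous stencils are `O(h⁴)`, while weights of smooth stencils converge
to the renormalized linear weights at rate `O(h)`. -/
theorem stmt_10 (m : ℕ) (γ : Fin m → ℝ) (hγ : ∀ k, 0 < γ k)
    (hsum : ∑ k, γ k = 1) (S D : Finset (Fin m)) (hSD : Disjoint S D)
    (hcover : S ∪ D = Finset.univ) (hSne : S.Nonempty)
    (τ : ℝ → ℝ) (q : Fin m → ℝ → ℝ) (hq0 : ∀ k h, 0 ≤ q k h)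
    (fp : ℝ) (hfp : fp ≠ 0)
    (hτ : ∃ δ > 0, ∀ᶠ h in 𝓝[>] (0:ℝ), δ ≤ τ h)
    (hqS : ∀ k ∈ S,
      (fun h => q k h - (τ h)^2 / (fp^4 * h^4)) =O[𝓝[>] (0:ℝ)] fun h => (h^3)⁻¹)
    (hqD : ∀ k ∈ D, (fun h => q k h) =O[𝓝[>] (0:ℝ)] fun h => (τ h)^2) :
    (∀ k ∈ D,
      (fun h => γ k * (1 + q k h) / ∑ j, γ j * (1 + q j h))
        =O[𝓝[>] (0:ℝ)] fun h => h^4) ∧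
    (∀ k ∈ S,
      (fun h => γ k * (1 + q k h) / (∑ j, γ j * (1 + q j h)) - γ k / ∑ j ∈ S, γ j)
        =O[𝓝[>] (0:ℝ)] fun h => h) :=
  stmt_10_general m γ hγ S D hSD hcover hSne τ q fp hfp hτ hqS hqD
end

section
/- If ω₀⁴ + ω₀³ + ω₁³ = 1 + O(h⁴), ω₀³ = c + O(h) and ω₁³ = c + O(h) for a constant c > 0, P₀²+P₁² = 2P₀³ (the interface identity), and |P₀³ - H| = O(h⁴), |P₀² - H| = O(h³), |P₁² - H| = O(h³), then the reconstruction F = ω₀⁴P₀³ + ω₀³P₀² + ω₁³P₁² satisfies F - H = O(h⁴). -/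
/-!
Subtracting `H` times the weight sum and splitting each weight as `c` plus its
deviation, the error is
`H (Σω - 1) + ω₀⁴ (P₀³ - H) + (ω₀³ - c)(P₀² - H) + (ω₁³ - c)(P₁² - H) + c (P₀² + P₁² - 2H)`.
The interface identity turns the last term into `2c (P₀³ - H) = O(h⁴)`: the two
third-order errors of the quadratic substencils cancel because they carry the same
leading weight. The remaining deviations are `O(h) · O(h³)`, and `ω₀⁴` stays bounded
since the weights converge.
-/

open Asymptotics Filter Topology

theorem weno_error_decomposition (w₀ w₁ w₂ p q r H c : ℝ) (hP : q + r = 2 * p) :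
    w₀ * p + w₁ * q + w₂ * r - H =
      H * (w₀ + w₁ + w₂ - 1) + w₀ * (p - H) + (w₁ - c) * (q - H) + (w₂ - c) * (r - H) +
        2 * c * (p - H) := by
  linear_combination c * hP

theorem tendsto_of_sub_isBigO {α : Type*} {l : Filter α} {f g : α → ℝ} {a : ℝ}
    (hg : Tendsto g l (𝓝 0)) (hf : (fun x => f x - a) =O[l] g) : Tendsto f l (𝓝 a) :=
  tendsto_sub_nhds_zero_iff.mp (hf.trans_tendsto hg)

theorem stmt_11_general (ω04 ω03 ω13 P03 P02 P12 : ℝ → ℝ) (H c : ℝ)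
    (hsum : (fun h => ω04 h + ω03 h + ω13 h - 1) =O[𝓝[>] (0:ℝ)] fun h => h^4)
    (hω03 : (fun h => ω03 h - c) =O[𝓝[>] (0:ℝ)] fun h => h)
    (hω13 : (fun h => ω13 h - c) =O[𝓝[>] (0:ℝ)] fun h => h)
    (hP : ∀ h, P02 h + P12 h = 2 * P03 h)
    (hP03 : (fun h => P03 h - H) =O[𝓝[>] (0:ℝ)] fun h => h^4)
    (hP02 : (fun h => P02 h - H) =O[𝓝[>] (0:ℝ)] fun h => h^3)
    (hP12 : (fun h => P12 h - H) =O[𝓝[>] (0:ℝ)] fun h => h^3) :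
    (fun h => ω04 h * P03 h + ω03 h * P02 h + ω13 h * P12 h - H)
      =O[𝓝[>] (0:ℝ)] fun h => h^4 := by
  have hid : Tendsto (fun h : ℝ => h) (𝓝[>] 0) (𝓝 0) :=
    tendsto_nhdsWithin_of_tendsto_nhds tendsto_id
  have hω04 : ω04 =O[𝓝[>] (0:ℝ)] fun _ => (1 : ℝ) := by
    have hlim := ((tendsto_of_sub_isBigO (by simpa using hid.pow 4) hsum).sub
      (tendsto_of_sub_isBigO hid hω03)).sub (tendsto_of_sub_isBigO hid hω13)
    exact (hlim.isBigO_one ℝ).congr_left fun h => by ring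
  have hcross₀ : (fun h => (ω03 h - c) * (P02 h - H)) =O[𝓝[>] (0:ℝ)] fun h => h ^ 4 :=
    (hω03.mul hP02).congr_right fun h => by ring
  have hcross₁ : (fun h => (ω13 h - c) * (P12 h - H)) =O[𝓝[>] (0:ℝ)] fun h => h ^ 4 :=
    (hω13.mul hP12).congr_right fun h => by ring
  refine ((((hsum.const_mul_left H).add ((hω04.mul hP03).congr_right fun h => one_mul _)).add
    hcross₀).add hcross₁).add (hP03.const_mul_left (2 * c)) |>.congr_left fun h => ?_
  exact (weno_error_decomposition _ _ _ _ _ _ H c (hP h)).symm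

/-- Fourth-order accuracy of the WENO-AO(5,4,3) reconstruction when the
solution is smooth on the four-point stencil but discontinuous on the
five-point stencil. -/
theorem stmt_11 (ω04 ω03 ω13 P03 P02 P12 : ℝ → ℝ) (H c : ℝ) (hc : 0 < c)
    (hsum : (fun h => ω04 h + ω03 h + ω13 h - 1) =O[𝓝[>] (0:ℝ)] fun h => h^4)
    (hω03 : (fun h => ω03 h - c) =O[𝓝[>] (0:ℝ)] fun h => h)
    (hω13 : (fun h => ω13 h - c) =O[𝓝[>] (0:ℝ)] fun h => h)
    (hP : ∀ h, P02 h + P12 h = 2 * P03 h)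
    (hP03 : (fun h => P03 h - H) =O[𝓝[>] (0:ℝ)] fun h => h^4)
    (hP02 : (fun h => P02 h - H) =O[𝓝[>] (0:ℝ)] fun h => h^3)
    (hP12 : (fun h => P12 h - H) =O[𝓝[>] (0:ℝ)] fun h => h^3) :
    (fun h => ω04 h * P03 h + ω03 h * P02 h + ω13 h * P12 h - H)
      =O[𝓝[>] (0:ℝ)] fun h => h^4 :=
  stmt_11_general ω04 ω03 ω13 P03 P02 P12 H c hsum hω03 hω13 hP hP03 hP02 hP12
end
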